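/- arXiv:1908.02734 — 8 statements merged into one kernel-verified Lean document; each statement's English description precedes it below -/
import Mathlib

section
/- Let S be a convex subset of ℝⁿ, let ω : S → ℝ be continuously differentiable and 1-strongly convex, and define the Bregman divergence W(y,x) = ω(y) - ω(x) - ⟨∇ω(x), y - x⟩. Suppose g : S → ℝ satisfies g(y) ≥ g(x) + ⟨g'(x), y - x⟩ + μ·W(y,x) for all x, y ∈ S and some μ ≥ 0, where g' is a (sub)gradient selection. If x̄ = argmin_{x ∈ S} { g(x) + W(x, x̃) }, then for all x ∈ S: g(x̄) + W(x̄, x̃) + (μ+1)·W(x, x̄) ≤ g(x) + W(x, x̃). -/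
local notation "⟪" x ", " y "⟫" => @inner ℝ _ _ x y

/-!
Put `z t = (1 - t) x̄ + t x`. The Bregman divergence `W(·, x̃)` differs from `ω` by an affine
function, so `W(z t, x̃)` falls short of the chord `(1 - t) W(x̄, x̃) + t W(x, x̃)` by exactly the
Jensen gap `J t = (1 - t) ω x̄ + t ω x - ω (z t)`; the relative strong convexity of `g` makes
`g (z t)` fall short of its chord by at least `μ J t`. Comparing with the minimality of `x̄` at
`z t` gives `(μ + 1) J t ≤ t (Φ x - Φ x̄)` for `Φ = g + W(·, x̃)`, and `J t / t → W(x, x̄)` as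
`t → 0⁺`.
-/

open Filter Topology AffineMap Set

section JensenGap

variable {E : Type*} [NormedAddCommGroup E] [NormedSpace ℝ E]

def jensenGap (ω : E → ℝ) (a b : E) (t : ℝ) : ℝ :=
  (1 - t) * ω a + t * ω b - ω (lineMap a b t)

variable {ω : E → ℝ}

lemma tendsto_jensenGap_div {f : E →L[ℝ] ℝ} {a : E} (hω : HasFDerivAt ω f a) (b : E) :
    Tendsto (fun t ↦ jensenGap ω a b t / t) (𝓝[>] 0) (𝓝 (ω b - ω a - f (b - a))) := by
  have hderiv : HasDerivAt (fun t : ℝ ↦ ω (lineMap a b t)) (f (b - a)) 0 := by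
    have hline : HasDerivAt (lineMap a b) (b - a) (0 : ℝ) := hasDerivAt_lineMap
    exact (lineMap_apply_zero a b (k := ℝ) ▸ hω).comp_hasDerivAt (0 : ℝ) hline
  refine (hderiv.tendsto_slope_zero_right.const_sub (ω b - ω a)).congr' ?_
  filter_upwards [self_mem_nhdsWithin] with t (ht : 0 < t)
  simp only [jensenGap, zero_add, lineMap_apply_zero, smul_eq_mul]
  field_simp
  ring

end JensenGap

section Bregman

variable {E : Type*} [NormedAddCommGroup E] [InnerProductSpace ℝ E]

def bregmanDiv (ω : E → ℝ) (gradω : E → E) (y x : E) : ℝ :=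
  ω y - ω x - ⟪gradω x, y - x⟫

variable {ω : E → ℝ} {gradω : E → E}

@[simp]
lemma bregmanDiv_self (x : E) : bregmanDiv ω gradω x x = 0 := by
  simp [bregmanDiv]

lemma inner_lineMap_sub (p a b c : E) (t : ℝ) :
    ⟪p, lineMap a b t - c⟫ = (1 - t) * ⟪p, a - c⟫ + t * ⟪p, b - c⟫ := by
  have : lineMap a b t - c = (1 - t) • (a - c) + t • (b - c) := by
    rw [lineMap_apply_module]; module
  rw [this, inner_add_right, real_inner_smul_right, real_inner_smul_right]

lemma jensenGap_eq_bregmanDiv (a b c : E) (t : ℝ) :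
    jensenGap ω a b t = (1 - t) * bregmanDiv ω gradω a c + t * bregmanDiv ω gradω b c
      - bregmanDiv ω gradω (lineMap a b t) c := by
  simp only [jensenGap, bregmanDiv, inner_lineMap_sub]
  ring

lemma jensenGap_eq_bregmanDiv_lineMap (a b : E) (t : ℝ) :
    jensenGap ω a b t = (1 - t) * bregmanDiv ω gradω a (lineMap a b t)
      + t * bregmanDiv ω gradω b (lineMap a b t) := by
  simpa using jensenGap_eq_bregmanDiv (gradω := gradω) a b (lineMap a b t) t

variable {S : Set E} {g : E → ℝ} {g' : E → E} {μ : ℝ} {c xbar : E}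

lemma add_mul_jensenGap_le (hS : Convex ℝ S)
    (hg : ∀ x ∈ S, ∀ y ∈ S, g y ≥ g x + ⟪g' x, y - x⟫ + μ * bregmanDiv ω gradω y x)
    {a b : E} (ha : a ∈ S) (hb : b ∈ S) {t : ℝ} (ht : t ∈ Icc 0 1) :
    g (lineMap a b t) + μ * jensenGap ω a b t ≤ (1 - t) * g a + t * g b := by
  have hz := hS.lineMap_mem ha hb ht
  have hza := mul_le_mul_of_nonneg_left (hg _ hz a ha) (sub_nonneg.2 ht.2)
  have hzb := mul_le_mul_of_nonneg_left (hg _ hz b hb) ht.1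
  have hinner : (1 - t) * ⟪g' (lineMap a b t), a - lineMap a b t⟫
      + t * ⟪g' (lineMap a b t), b - lineMap a b t⟫ = 0 := by
    rw [← inner_lineMap_sub, sub_self, inner_zero_right]
  rw [jensenGap_eq_bregmanDiv_lineMap (gradω := gradω)]
  linarith

lemma mul_jensenGap_le_of_isMinOn (hS : Convex ℝ S)
    (hg : ∀ x ∈ S, ∀ y ∈ S, g y ≥ g x + ⟪g' x, y - x⟫ + μ * bregmanDiv ω gradω y x)
    (hmin : IsMinOn (fun x ↦ g x + bregmanDiv ω gradω x c) S xbar) (hxbar : xbar ∈ S)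
    {x : E} (hx : x ∈ S) {t : ℝ} (ht : t ∈ Icc 0 1) :
    (μ + 1) * jensenGap ω xbar x t
      ≤ t * (g x + bregmanDiv ω gradω x c - (g xbar + bregmanDiv ω gradω xbar c)) := by
  have hchord := add_mul_jensenGap_le hS hg hxbar hx ht
  have hmin_z : g xbar + bregmanDiv ω gradω xbar c
      ≤ g (lineMap xbar x t) + bregmanDiv ω gradω (lineMap xbar x t) c :=
    hmin (hS.lineMap_mem hxbar hx ht)
  have hgap := jensenGap_eq_bregmanDiv (ω := ω) (gradω := gradω) xbar x c t
  linarith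

variable [CompleteSpace E]

lemma tendsto_jensenGap_div_bregmanDiv {a : E} (hω : HasGradientAt ω (gradω a) a) (b : E) :
    Tendsto (fun t ↦ jensenGap ω a b t / t) (𝓝[>] 0) (𝓝 (bregmanDiv ω gradω b a)) := by
  simpa [bregmanDiv] using tendsto_jensenGap_div (hasGradientAt_iff_hasFDerivAt.1 hω) b

theorem bregman_three_point (hS : Convex ℝ S) (hω : HasGradientAt ω (gradω xbar) xbar)
    (hg : ∀ x ∈ S, ∀ y ∈ S, g y ≥ g x + ⟪g' x, y - x⟫ + μ * bregmanDiv ω gradω y x)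
    (hmin : IsMinOn (fun x ↦ g x + bregmanDiv ω gradω x c) S xbar) (hxbar : xbar ∈ S)
    {x : E} (hx : x ∈ S) :
    g xbar + bregmanDiv ω gradω xbar c + (μ + 1) * bregmanDiv ω gradω x xbar
      ≤ g x + bregmanDiv ω gradω x c := by
  have hlim := (tendsto_jensenGap_div_bregmanDiv hω x).const_mul (μ + 1)
  have hbound : ∀ᶠ t in 𝓝[>] (0 : ℝ), (μ + 1) * (jensenGap ω xbar x t / t)
      ≤ g x + bregmanDiv ω gradω x c - (g xbar + bregmanDiv ω gradω xbar c) := by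
    filter_upwards [Ioc_mem_nhdsGT zero_lt_one] with t ht
    rw [← mul_div_assoc, div_le_iff₀ ht.1, mul_comm _ t]
    exact mul_jensenGap_le_of_isMinOn hS hg hmin hxbar hx (Ioc_subset_Icc_self ht)
  linarith [le_of_tendsto hlim hbound]

end Bregman

theorem stmt_0_general {n : ℕ} (S : Set (EuclideanSpace ℝ (Fin n))) (hS : Convex ℝ S)
    (ω : EuclideanSpace ℝ (Fin n) → ℝ)
    (gradω : EuclideanSpace ℝ (Fin n) → EuclideanSpace ℝ (Fin n))
    (hω : ∀ x ∈ S, HasGradientAt ω (gradω x) x)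
    (W : EuclideanSpace ℝ (Fin n) → EuclideanSpace ℝ (Fin n) → ℝ)
    (hW : ∀ x y, W y x = ω y - ω x - ⟪gradω x, y - x⟫)
    (g : EuclideanSpace ℝ (Fin n) → ℝ)
    (g' : EuclideanSpace ℝ (Fin n) → EuclideanSpace ℝ (Fin n))
    (μ : ℝ)
    (hg : ∀ x ∈ S, ∀ y ∈ S, g y ≥ g x + ⟪g' x, y - x⟫ + μ * W y x)
    (xtil : EuclideanSpace ℝ (Fin n))
    (xbar : EuclideanSpace ℝ (Fin n)) (hxbar : xbar ∈ S)
    (hmin : ∀ x ∈ S, g xbar + W xbar xtil ≤ g x + W x xtil) :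
    ∀ x ∈ S, g xbar + W xbar xtil + (μ + 1) * W x xbar ≤ g x + W x xtil := by
  obtain rfl : W = bregmanDiv ω gradω := funext₂ fun y x ↦ hW x y
  exact fun x hx ↦ bregman_three_point hS (hω xbar hxbar) hg hmin hxbar hx

/-- Lemma 2.4: three-point lemma for Bregman proximal steps. -/
theorem stmt_0 {n : ℕ} (S : Set (EuclideanSpace ℝ (Fin n))) (hS : Convex ℝ S)
    (ω : EuclideanSpace ℝ (Fin n) → ℝ)
    (gradω : EuclideanSpace ℝ (Fin n) → EuclideanSpace ℝ (Fin n))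
    (hω : ∀ x ∈ S, HasGradientAt ω (gradω x) x)
    (hsc : ∀ x ∈ S, ∀ y ∈ S,
      ω y ≥ ω x + ⟪gradω x, y - x⟫ + (1/2) * ‖y - x‖^2)
    (W : EuclideanSpace ℝ (Fin n) → EuclideanSpace ℝ (Fin n) → ℝ)
    (hW : ∀ x y, W y x = ω y - ω x - ⟪gradω x, y - x⟫)
    (g : EuclideanSpace ℝ (Fin n) → ℝ)
    (g' : EuclideanSpace ℝ (Fin n) → EuclideanSpace ℝ (Fin n))
    (μ : ℝ) (hμ : 0 ≤ μ)
    (hg : ∀ x ∈ S, ∀ y ∈ S, g y ≥ g x + ⟪g' x, y - x⟫ + μ * W y x)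
    (xtil : EuclideanSpace ℝ (Fin n)) (hxtil : xtil ∈ S)
    (xbar : EuclideanSpace ℝ (Fin n)) (hxbar : xbar ∈ S)
    (hmin : ∀ x ∈ S, g xbar + W xbar xtil ≤ g x + W x xtil) :
    ∀ x ∈ S, g xbar + W xbar xtil + (μ + 1) * W x xbar ≤ g x + W x xtil :=
  stmt_0_general S hS ω gradω hω W hW g g' μ hg xtil xbar hxbar hmin
end

section
/- Consider the proximal point iteration: x_k = argmin over x ∈ X of ψ₀(x) + 2μ₀W(x, x_{k-1}) subject to ψᵢ(x) + 2μᵢW(x, x_{k-1}) ≤ 0 for i ∈ [m], where ψᵢ(·; x_{k-1}) := ψᵢ(·) + 2μᵢW(·, x_{k-1}) is μᵢ-strongly convex. If x₀ is feasible (ψᵢ(x₀) ≤ 0 for all i), then the iterates satisfy Σ_{k=1}^{K} ‖x_{k-1} - x_k‖² ≤ (2/(3μ₀)) · [ψ₀(x₀) - ψ₀(x_K)], and in particular the sequence {ψ₀(x_k)} is monotonically decreasing. -/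
/-!
Every iterate is feasible for the original constraints (the proximal terms are nonnegative), so
`x k` is a feasible test point of the `k`-th subproblem, where its proximal terms vanish. The
strong-convexity optimality inequality of `x (k + 1)` at `z = x k`, together with
`‖u - v‖² ≤ 2 W u v`, gives `ψ₀ (x k) ≥ ψ₀ (x (k + 1)) + (3 μ₀ / 2) ‖x k - x (k + 1)‖²`,
which is the monotone descent; summing it telescopes.
-/

open Finset

theorem sum_range_le_mul_sub_of_le {a f : ℕ → ℝ} {c : ℝ}
    (h : ∀ k, a k ≤ c * (f k - f (k + 1))) (K : ℕ) :
    ∑ k ∈ range K, a k ≤ c * (f 0 - f K) :=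
  calc ∑ k ∈ range K, a k ≤ ∑ k ∈ range K, c * (f k - f (k + 1)) := sum_le_sum fun k _ => h k
    _ = c * (f 0 - f K) := by rw [← mul_sum, sum_range_sub']

theorem sq_norm_sub_le_of_prox_descent {E : Type*} [SeminormedAddCommGroup E]
    {W : E → E → ℝ} (hWlow : ∀ x y, ‖x - y‖ ^ 2 ≤ 2 * W x y) {φ : E → ℝ} {μ : ℝ} (hμ : 0 < μ)
    {a b : E} (h : φ b + 2 * μ * W b a + μ * W a b ≤ φ a) :
    ‖a - b‖ ^ 2 ≤ 2 / (3 * μ) * (φ a - φ b) := by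
  have hba := hWlow b a
  have hab := hWlow a b
  rw [norm_sub_rev] at hba
  rw [div_mul_eq_mul_div, le_div_iff₀ (by positivity)]
  nlinarith

theorem stmt_6_general {n m : ℕ} (X : Set (EuclideanSpace ℝ (Fin n)))
    (W : EuclideanSpace ℝ (Fin n) → EuclideanSpace ℝ (Fin n) → ℝ)
    (hWpos : ∀ x y, 0 ≤ W x y)
    (hWlow : ∀ x y, ‖x - y‖^2 ≤ 2 * W x y)
    (hWzero : ∀ x, W x x = 0)
    (ψ0 : EuclideanSpace ℝ (Fin n) → ℝ) (ψ : Fin m → EuclideanSpace ℝ (Fin n) → ℝ)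
    (μ0 : ℝ) (μ : Fin m → ℝ) (hμ0 : 0 < μ0) (hμ : ∀ i, 0 ≤ μ i)
    (x : ℕ → EuclideanSpace ℝ (Fin n))
    (hx0 : x 0 ∈ X) (hfeas0 : ∀ i, ψ i (x 0) ≤ 0)
    (hxk : ∀ k, x (k + 1) ∈ X)
    -- x_{k+1} is feasible for the (k+1)-st subproblem
    (hsubfeas : ∀ k, ∀ i, ψ i (x (k + 1)) + 2 * μ i * W (x (k + 1)) (x k) ≤ 0)
    -- x_{k+1} minimizes the μ₀-strongly convex subproblem objective
    (hopt : ∀ k, ∀ z ∈ X, (∀ i, ψ i z + 2 * μ i * W z (x k) ≤ 0) →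
      ψ0 z + 2 * μ0 * W z (x k) ≥
        ψ0 (x (k + 1)) + 2 * μ0 * W (x (k + 1)) (x k) + μ0 * W z (x (k + 1))) :
    (∀ K : ℕ, ∑ k ∈ Finset.range K, ‖x k - x (k + 1)‖^2 ≤
        2 / (3 * μ0) * (ψ0 (x 0) - ψ0 (x K))) ∧
    (∀ k, ψ0 (x (k + 1)) ≤ ψ0 (x k)) := by
  have hmem : ∀ k, x k ∈ X := by
    rintro (_ | k)
    exacts [hx0, hxk k]
  have hfeas : ∀ k i, ψ i (x k) ≤ 0 := by
    rintro (_ | k) i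
    · exact hfeas0 i
    · nlinarith [hsubfeas k i, mul_nonneg (hμ i) (hWpos (x (k + 1)) (x k))]
  have hstep : ∀ k, ‖x k - x (k + 1)‖ ^ 2 ≤ 2 / (3 * μ0) * (ψ0 (x k) - ψ0 (x (k + 1))) := by
    intro k
    refine sq_norm_sub_le_of_prox_descent hWlow hμ0 ?_
    have h := hopt k (x k) (hmem k) fun i => by simpa [hWzero] using hfeas k i
    rw [hWzero, mul_zero, add_zero] at h
    linarith
  refine ⟨sum_range_le_mul_sub_of_le hstep, fun k => ?_⟩
  have hc : 0 < 2 / (3 * μ0) := by positivity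
  have := nonneg_of_mul_nonneg_right ((sq_nonneg _).trans (hstep k)) hc
  linarith

/-- Theorem 3.3 a): square summability of successive iterates and monotone
descent for the exact proximal point method. -/
theorem stmt_6 {n m : ℕ} (X : Set (EuclideanSpace ℝ (Fin n)))
    (hXc : Convex ℝ X) (hXcp : IsCompact X)
    (W : EuclideanSpace ℝ (Fin n) → EuclideanSpace ℝ (Fin n) → ℝ)
    (hWpos : ∀ x y, 0 ≤ W x y)
    (hWlow : ∀ x y, ‖x - y‖^2 ≤ 2 * W x y)
    (hWzero : ∀ x, W x x = 0)
    (ψ0 : EuclideanSpace ℝ (Fin n) → ℝ) (ψ : Fin m → EuclideanSpace ℝ (Fin n) → ℝ)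
    (μ0 : ℝ) (μ : Fin m → ℝ) (hμ0 : 0 < μ0) (hμ : ∀ i, 0 ≤ μ i)
    (x : ℕ → EuclideanSpace ℝ (Fin n))
    (hx0 : x 0 ∈ X) (hfeas0 : ∀ i, ψ i (x 0) ≤ 0)
    (hxk : ∀ k, x (k + 1) ∈ X)
    -- x_{k+1} is feasible for the (k+1)-st subproblem
    (hsubfeas : ∀ k, ∀ i, ψ i (x (k + 1)) + 2 * μ i * W (x (k + 1)) (x k) ≤ 0)
    -- x_{k+1} minimizes the μ₀-strongly convex subproblem objective
    (hopt : ∀ k, ∀ z ∈ X, (∀ i, ψ i z + 2 * μ i * W z (x k) ≤ 0) →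
      ψ0 z + 2 * μ0 * W z (x k) ≥
        ψ0 (x (k + 1)) + 2 * μ0 * W (x (k + 1)) (x k) + μ0 * W z (x (k + 1))) :
    (∀ K : ℕ, ∑ k ∈ Finset.range K, ‖x k - x (k + 1)‖^2 ≤
        2 / (3 * μ0) * (ψ0 (x 0) - ψ0 (x K))) ∧
    (∀ k, ψ0 (x (k + 1)) ≤ ψ0 (x k)) :=
  stmt_6_general X W hWpos hWlow hWzero ψ0 ψ μ0 μ hμ0 hμ x hx0 hfeas0 hxk hsubfeas hopt
end

section
/- In the exact proximal point method for nonconvex functional constrained optimization, suppose x₀ is strictly feasible (ψᵢ(x₀) < 0 for all i ∈ [m]). Then either the algorithm terminates with x₁ = x₀, or every iterate x_k is strictly feasible for the original problem, i.e., ψᵢ(x_k) < 0 for all i ∈ [m] and all k ≥ 1. -/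
/-! If `x_{k+1} ≠ x_k`, the penalty `2 μᵢ W(x_{k+1}, x_k)` is positive, so feasibility for the
subproblem gives `ψᵢ(x_{k+1}) ≤ -2 μᵢ W(x_{k+1}, x_k) < 0`; if `x_{k+1} = x_k`, strict feasibility
is inherited from `x_k`. Induction on `k` then makes every iterate strictly feasible. -/

section ProximalStep

variable {α : Type*} {W : α → α → ℝ}

theorem neg_of_add_prox_nonpos (hWpos : ∀ x y, x ≠ y → 0 < W x y) {f : α → ℝ} {μ : ℝ}
    (hμ : 0 < μ) {y z : α} (hy : f y < 0) (hz : f z + 2 * μ * W z y ≤ 0) : f z < 0 := by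
  rcases eq_or_ne z y with rfl | hzy
  · exact hy
  · have hpen : 0 < 2 * μ * W z y := by have := hWpos z y hzy; positivity
    linarith

theorem iterate_neg_of_prox_feasible (hWpos : ∀ x y, x ≠ y → 0 < W x y) {ι : Type*}
    {ψ : ι → α → ℝ} {μ : ι → ℝ} (hμ : ∀ i, 0 < μ i) {x : ℕ → α}
    (hstrict0 : ∀ i, ψ i (x 0) < 0)
    (hsubfeas : ∀ k i, ψ i (x (k + 1)) + 2 * μ i * W (x (k + 1)) (x k) ≤ 0) :
    ∀ k i, ψ i (x k) < 0 := by
  intro k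
  induction k with
  | zero => exact hstrict0
  | succ k ih => exact fun i => neg_of_add_prox_nonpos hWpos (hμ i) (ih i) (hsubfeas k i)

end ProximalStep

theorem stmt_7_general {n m : ℕ}
    (W : EuclideanSpace ℝ (Fin n) → EuclideanSpace ℝ (Fin n) → ℝ)
    (hWpos : ∀ x y, x ≠ y → 0 < W x y)
    (ψ : Fin m → EuclideanSpace ℝ (Fin n) → ℝ)
    (μ : Fin m → ℝ) (hμ : ∀ i, 0 < μ i)
    (x : ℕ → EuclideanSpace ℝ (Fin n))
    -- x₀ is strictly feasible
    (hstrict0 : ∀ i, ψ i (x 0) < 0)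
    -- x_{k+1} solves (in particular is feasible for) the (k+1)-st subproblem
    (hsubfeas : ∀ k, ∀ i, ψ i (x (k + 1)) + 2 * μ i * W (x (k + 1)) (x k) ≤ 0) :
    x 1 = x 0 ∨ ∀ k, 1 ≤ k → ∀ i, ψ i (x k) < 0 :=
  Or.inr fun k _ => iterate_neg_of_prox_feasible hWpos hμ hstrict0 hsubfeas k

/-- Theorem 3.3 (strict feasibility): either the exact proximal point method
terminates with x₁ = x₀, or all iterates are strictly feasible. -/
theorem stmt_7 {n m : ℕ} (X : Set (EuclideanSpace ℝ (Fin n)))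
    (hXc : Convex ℝ X) (hXcp : IsCompact X)
    (W : EuclideanSpace ℝ (Fin n) → EuclideanSpace ℝ (Fin n) → ℝ)
    (hWlow : ∀ x y, ‖x - y‖^2 ≤ 2 * W x y)
    (hWzero : ∀ x, W x x = 0)
    (hWpos : ∀ x y, x ≠ y → 0 < W x y)
    (ψ : Fin m → EuclideanSpace ℝ (Fin n) → ℝ)
    (hψcont : ∀ i, Continuous (ψ i))
    (μ : Fin m → ℝ) (hμ : ∀ i, 0 < μ i)
    (x : ℕ → EuclideanSpace ℝ (Fin n))
    (hx0 : x 0 ∈ X)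
    -- x₀ is strictly feasible
    (hstrict0 : ∀ i, ψ i (x 0) < 0)
    (hxk : ∀ k, x (k + 1) ∈ X)
    -- x_{k+1} solves (in particular is feasible for) the (k+1)-st subproblem
    (hsubfeas : ∀ k, ∀ i, ψ i (x (k + 1)) + 2 * μ i * W (x (k + 1)) (x k) ≤ 0) :
    x 1 = x 0 ∨ ∀ k, 1 ≤ k → ∀ i, ψ i (x k) < 0 :=
  stmt_7_general W hWpos ψ μ hμ x hstrict0 hsubfeas
end

section
/- Let x₀ be strictly feasible and let (x_k, y_k) be a KKT pair for the k-th proximal subproblem min_{x∈X} ψ₀(x; x_{k-1}) s.t. ψᵢ(x; x_{k-1}) ≤ 0, where ψ₀(·; x̄) is μ₀-strongly convex and ψᵢ(·; x̄) is μᵢ-strongly convex w.r.t. W. Then the dual multipliers satisfy ‖y_k‖₁ ≤ [ψ₀(x_{k-1}) - ψ₀(x_k)] / min_{1≤i≤m} {-ψᵢ(x_{k-1})}. -/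
/-!
Evaluate the saddle inequality at the prox centre `x = x_{k-1}`: the Bregman terms at `x_{k-1}`
vanish and the remaining ones are nonnegative, so `∑ yᵢ (-ψᵢ(x_{k-1})) ≤ ψ₀(x_{k-1}) - ψ₀(x_k)`.
Each `-ψᵢ(x_{k-1})` is at least their minimum `c > 0`, whence `c ∑ yᵢ ≤ ψ₀(x_{k-1}) - ψ₀(x_k)`.
-/

open Finset

theorem Finset.inf'_mul_sum_le_sum_mul {ι 𝕜 : Type*} [Field 𝕜] [LinearOrder 𝕜] [IsStrictOrderedRing 𝕜]
    {s : Finset ι} (hs : s.Nonempty) (f y : ι → 𝕜) (hy : ∀ i ∈ s, 0 ≤ y i) :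
    s.inf' hs f * ∑ i ∈ s, y i ≤ ∑ i ∈ s, y i * f i := by
  rw [mul_sum]
  refine sum_le_sum fun i hi => ?_
  rw [mul_comm]
  exact mul_le_mul_of_nonneg_left (inf'_le f hi) (hy i hi)

theorem Finset.sum_le_div_inf'_of_sum_mul_le {ι 𝕜 : Type*} [Field 𝕜] [LinearOrder 𝕜]
    [IsStrictOrderedRing 𝕜] {s : Finset ι} (hs : s.Nonempty) {f y : ι → 𝕜} {B : 𝕜}
    (hy : ∀ i ∈ s, 0 ≤ y i) (hf : ∀ i ∈ s, 0 < f i) (hB : ∑ i ∈ s, y i * f i ≤ B) :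
    ∑ i ∈ s, y i ≤ B / s.inf' hs f := by
  rw [le_div_iff₀ ((lt_inf'_iff hs).2 hf), mul_comm]
  exact (inf'_mul_sum_le_sum_mul hs f y hy).trans hB

theorem stmt_8_general {n m : ℕ} [NeZero m] (X : Set (EuclideanSpace ℝ (Fin n)))
    (W : EuclideanSpace ℝ (Fin n) → EuclideanSpace ℝ (Fin n) → ℝ)
    (hWpos : ∀ x y, 0 ≤ W x y) (hWzero : ∀ x, W x x = 0)
    (ψ0 : EuclideanSpace ℝ (Fin n) → ℝ) (ψ : Fin m → EuclideanSpace ℝ (Fin n) → ℝ)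
    (μ0 : ℝ) (μ : Fin m → ℝ) (hμ0 : 0 ≤ μ0) (hμ : ∀ i, 0 ≤ μ i)
    (xkm1 xk : EuclideanSpace ℝ (Fin n)) (hxkm1 : xkm1 ∈ X)
    -- x_{k-1} is strictly feasible for the original problem
    (hstrict : ∀ i, ψ i xkm1 < 0)
    (y : Fin m → ℝ) (hy : ∀ i, 0 ≤ y i)
    -- saddle inequality satisfied by the KKT pair (x_k, y_k) of the subproblem
    (hsaddle : ∀ x ∈ X,
      (ψ0 x + 2 * μ0 * W x xkm1) - (ψ0 xk + 2 * μ0 * W xk xkm1)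
        + ∑ i, y i * (ψ i x + 2 * μ i * W x xkm1)
      ≥ (μ0 + ∑ i, μ i * y i) * W x xk) :
    ∑ i, y i ≤ (ψ0 xkm1 - ψ0 xk) /
      (Finset.univ.inf' Finset.univ_nonempty fun i => -ψ i xkm1) := by
  have hsaddle_centre := hsaddle xkm1 hxkm1
  simp only [hWzero, mul_zero, add_zero] at hsaddle_centre
  have hweight : 0 ≤ μ0 + ∑ i, μ i * y i :=
    add_nonneg hμ0 (sum_nonneg fun i _ => mul_nonneg (hμ i) (hy i))
  have hslack : ∑ i, y i * -ψ i xkm1 ≤ ψ0 xkm1 - ψ0 xk := by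
    have hprox : 0 ≤ 2 * μ0 * W xk xkm1 := by have := hWpos xk xkm1; positivity
    have hrhs : 0 ≤ (μ0 + ∑ i, μ i * y i) * W xkm1 xk := mul_nonneg hweight (hWpos xkm1 xk)
    simp only [mul_neg, sum_neg_distrib]
    linarith
  exact sum_le_div_inf'_of_sum_mul_le univ_nonempty (fun i _ => hy i)
    (fun i _ => neg_pos.2 (hstrict i)) hslack

/-- Proposition 3.5 (relation (3.9)): bound on the ℓ₁-norm of the dual
multipliers of the proximal subproblem via strict feasibility of x_{k-1}. -/
theorem stmt_8 {n m : ℕ} [NeZero m] (X : Set (EuclideanSpace ℝ (Fin n)))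
    (hXc : Convex ℝ X)
    (W : EuclideanSpace ℝ (Fin n) → EuclideanSpace ℝ (Fin n) → ℝ)
    (hWpos : ∀ x y, 0 ≤ W x y) (hWzero : ∀ x, W x x = 0)
    (ψ0 : EuclideanSpace ℝ (Fin n) → ℝ) (ψ : Fin m → EuclideanSpace ℝ (Fin n) → ℝ)
    (μ0 : ℝ) (μ : Fin m → ℝ) (hμ0 : 0 ≤ μ0) (hμ : ∀ i, 0 ≤ μ i)
    (xkm1 xk : EuclideanSpace ℝ (Fin n)) (hxkm1 : xkm1 ∈ X) (hxk : xk ∈ X)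
    -- x_{k-1} is strictly feasible for the original problem
    (hstrict : ∀ i, ψ i xkm1 < 0)
    (y : Fin m → ℝ) (hy : ∀ i, 0 ≤ y i)
    -- saddle inequality satisfied by the KKT pair (x_k, y_k) of the subproblem
    (hsaddle : ∀ x ∈ X,
      (ψ0 x + 2 * μ0 * W x xkm1) - (ψ0 xk + 2 * μ0 * W xk xkm1)
        + ∑ i, y i * (ψ i x + 2 * μ i * W x xkm1)
      ≥ (μ0 + ∑ i, μ i * y i) * W x xk) :
    ∑ i, y i ≤ (ψ0 xkm1 - ψ0 xk) /
      (Finset.univ.inf' Finset.univ_nonempty fun i => -ψ i xkm1) :=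
  stmt_8_general X W hWpos hWzero ψ0 ψ μ0 μ hμ0 hμ xkm1 xk hxkm1 hstrict y hy hsaddle
end

section
/- Suppose there exists x̄ ∈ X with ψᵢ(x̄) ≤ -2μᵢD_X² for all i ∈ [m], where D_X := max_{x,y∈X} √(2W(x,y)). Then for every x_{k-1} ∈ X, the point x̄ satisfies ψᵢ(x̄) + 2μᵢW(x̄, x_{k-1}) ≤ -μᵢD_X² < 0 (so every proximal subproblem is strictly feasible), and any KKT multiplier y_k of the k-th subproblem satisfies the uniform bound ‖y_k‖₁ ≤ (ψ₀(x̄) - ψ₀* + μ₀D_X²)/(μ_min D_X²), where μ_min = min_{1≤i≤m} μᵢ > 0 and ψ₀* = min over the feasible set of ψ₀. -/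
/-!
Since `2 W(x̄, x_{k-1}) ≤ D_X²`, the proximal term costs at most `μᵢ D_X²`, so strong
feasibility leaves every proximal constraint at `x̄` with slack at least `μ_min D_X²`.
Evaluating the saddle inequality at `x̄`, its right-hand side is nonnegative, the constraint
terms contribute at most `-μ_min D_X² ‖y_k‖₁`, and the objective terms at most
`ψ₀(x̄) - ψ₀* + μ₀ D_X²`; rearranging gives the bound on `‖y_k‖₁`.
-/

open Finset

section ProximalSubproblem

variable {E ι : Type*} [Fintype ι] {X : Set E} {W : E → E → ℝ} {D : ℝ}

theorem prox_constraint_le_of_strong_feasible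
    (hdiam : ∀ x ∈ X, ∀ y ∈ X, 2 * W x y ≤ D ^ 2) {g : E → ℝ} {μ : ℝ} (hμ : 0 ≤ μ)
    {xbar c : E} (hxbar : xbar ∈ X) (hc : c ∈ X) (hg : g xbar ≤ -2 * μ * D ^ 2) :
    g xbar + 2 * μ * W xbar c ≤ -(μ * D ^ 2) := by
  nlinarith [mul_le_mul_of_nonneg_left (hdiam _ hxbar _ hc) hμ]

theorem sum_mul_le_neg_mul_sum {y c : ι → ℝ} (hy : ∀ i, 0 ≤ y i) {κ : ℝ}
    (hc : ∀ i, c i ≤ -κ) : ∑ i, y i * c i ≤ -(κ * ∑ i, y i) :=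
  calc ∑ i, y i * c i ≤ ∑ i, y i * -κ :=
        sum_le_sum fun i _ => mul_le_mul_of_nonneg_left (hc i) (hy i)
    _ = -(κ * ∑ i, y i) := by rw [← sum_mul]; ring

theorem sum_le_of_prox_saddle (hWpos : ∀ x y, 0 ≤ W x y)
    (hdiam : ∀ x ∈ X, ∀ y ∈ X, 2 * W x y ≤ D ^ 2)
    {ψ0 : E → ℝ} {ψ : ι → E → ℝ} {μ0 : ℝ} {μ : ι → ℝ} (hμ0 : 0 ≤ μ0) (hμ : ∀ i, 0 ≤ μ i)
    {xbar c xk : E} (hxbar : xbar ∈ X) (hc : c ∈ X) {y : ι → ℝ} (hy : ∀ i, 0 ≤ y i)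
    {κ : ℝ} (hκ : 0 < κ) (hslack : ∀ i, ψ i xbar + 2 * μ i * W xbar c ≤ -κ)
    {ψ0star : ℝ} (hψ0star : ψ0star ≤ ψ0 xk)
    (hsaddle : (ψ0 xbar + 2 * μ0 * W xbar c) - (ψ0 xk + 2 * μ0 * W xk c)
        + ∑ i, y i * (ψ i xbar + 2 * μ i * W xbar c)
      ≥ (μ0 + ∑ i, μ i * y i) * W xbar xk) :
    ∑ i, y i ≤ (ψ0 xbar - ψ0star + μ0 * D ^ 2) / κ := by
  have hconstr := sum_mul_le_neg_mul_sum hy hslack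
  have hrhs : 0 ≤ (μ0 + ∑ i, μ i * y i) * W xbar xk :=
    mul_nonneg (add_nonneg hμ0 (sum_nonneg fun i _ => mul_nonneg (hμ i) (hy i))) (hWpos _ _)
  have hprox_bar := mul_le_mul_of_nonneg_left (hdiam _ hxbar _ hc) hμ0
  have hprox_k := mul_nonneg hμ0 (hWpos xk c)
  rw [le_div_iff₀ hκ]
  linarith

end ProximalSubproblem

theorem stmt_9_general {n m : ℕ} [NeZero m] (X : Set (EuclideanSpace ℝ (Fin n)))
    (W : EuclideanSpace ℝ (Fin n) → EuclideanSpace ℝ (Fin n) → ℝ)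
    (hWpos : ∀ x y, 0 ≤ W x y)
    (DX : ℝ) (hDX : 0 < DX)
    -- D_X is the Bregman diameter: √(2 W(x,y)) ≤ D_X on X
    (hdiam : ∀ x ∈ X, ∀ y ∈ X, 2 * W x y ≤ DX ^ 2)
    (ψ0 : EuclideanSpace ℝ (Fin n) → ℝ) (ψ : Fin m → EuclideanSpace ℝ (Fin n) → ℝ)
    (μ0 : ℝ) (μ : Fin m → ℝ) (hμ0 : 0 ≤ μ0) (hμ : ∀ i, 0 < μ i)
    (xbar : EuclideanSpace ℝ (Fin n)) (hxbar : xbar ∈ X)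
    -- strong feasibility: ψᵢ(x̄) ≤ -2 μᵢ D_X²
    (hsf : ∀ i, ψ i xbar ≤ -2 * μ i * DX ^ 2)
    (xkm1 xk : EuclideanSpace ℝ (Fin n)) (hxkm1 : xkm1 ∈ X)
    (y : Fin m → ℝ) (hy : ∀ i, 0 ≤ y i)
    -- ψ₀* lower bounds the subproblem optimal value
    (ψ0star : ℝ) (hψ0star : ψ0star ≤ ψ0 xk)
    -- saddle inequality satisfied by the KKT pair (x_k, y_k) of the subproblem
    (hsaddle : ∀ x ∈ X,
      (ψ0 x + 2 * μ0 * W x xkm1) - (ψ0 xk + 2 * μ0 * W xk xkm1)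
        + ∑ i, y i * (ψ i x + 2 * μ i * W x xkm1)
      ≥ (μ0 + ∑ i, μ i * y i) * W x xk) :
    (∀ i, ψ i xbar + 2 * μ i * W xbar xkm1 ≤ -(μ i * DX ^ 2) ∧
      ψ i xbar + 2 * μ i * W xbar xkm1 < 0) ∧
    ∑ i, y i ≤ (ψ0 xbar - ψ0star + μ0 * DX ^ 2) /
      ((Finset.univ.inf' Finset.univ_nonempty μ) * DX ^ 2) := by
  have hslack i : ψ i xbar + 2 * μ i * W xbar xkm1 ≤ -(μ i * DX ^ 2) :=
    prox_constraint_le_of_strong_feasible hdiam (hμ i).le hxbar hxkm1 (hsf i)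
  set μmin := univ.inf' univ_nonempty μ
  have hμmin : 0 < μmin := (lt_inf'_iff _).2 fun i _ => hμ i
  refine ⟨fun i => ⟨hslack i, (hslack i).trans_lt (neg_neg_of_pos (by have := hμ i; positivity))⟩,
    ?_⟩
  refine sum_le_of_prox_saddle hWpos hdiam hμ0 (fun i => (hμ i).le) hxbar hxkm1 hy
    (by positivity) (fun i => (hslack i).trans ?_) hψ0star (hsaddle xbar hxbar)
  exact neg_le_neg (mul_le_mul_of_nonneg_right (inf'_le _ (mem_univ i)) (sq_nonneg DX))

/-- Lemma 3.12: strong feasibility condition (3.21) ensures strict feasibility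
of every proximal subproblem and a uniform bound on the dual multipliers. -/
theorem stmt_9 {n m : ℕ} [NeZero m] (X : Set (EuclideanSpace ℝ (Fin n)))
    (hXc : Convex ℝ X)
    (W : EuclideanSpace ℝ (Fin n) → EuclideanSpace ℝ (Fin n) → ℝ)
    (hWpos : ∀ x y, 0 ≤ W x y)
    (DX : ℝ) (hDX : 0 < DX)
    -- D_X is the Bregman diameter: √(2 W(x,y)) ≤ D_X on X
    (hdiam : ∀ x ∈ X, ∀ y ∈ X, 2 * W x y ≤ DX ^ 2)
    (ψ0 : EuclideanSpace ℝ (Fin n) → ℝ) (ψ : Fin m → EuclideanSpace ℝ (Fin n) → ℝ)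
    (μ0 : ℝ) (μ : Fin m → ℝ) (hμ0 : 0 ≤ μ0) (hμ : ∀ i, 0 < μ i)
    (xbar : EuclideanSpace ℝ (Fin n)) (hxbar : xbar ∈ X)
    -- strong feasibility: ψᵢ(x̄) ≤ -2 μᵢ D_X²
    (hsf : ∀ i, ψ i xbar ≤ -2 * μ i * DX ^ 2)
    (xkm1 xk : EuclideanSpace ℝ (Fin n)) (hxkm1 : xkm1 ∈ X) (hxk : xk ∈ X)
    (y : Fin m → ℝ) (hy : ∀ i, 0 ≤ y i)
    -- ψ₀* lower bounds the subproblem optimal value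
    (ψ0star : ℝ) (hψ0star : ψ0star ≤ ψ0 xk)
    -- saddle inequality satisfied by the KKT pair (x_k, y_k) of the subproblem
    (hsaddle : ∀ x ∈ X,
      (ψ0 x + 2 * μ0 * W x xkm1) - (ψ0 xk + 2 * μ0 * W xk xkm1)
        + ∑ i, y i * (ψ i x + 2 * μ i * W x xkm1)
      ≥ (μ0 + ∑ i, μ i * y i) * W x xk) :
    (∀ i, ψ i xbar + 2 * μ i * W xbar xkm1 ≤ -(μ i * DX ^ 2) ∧
      ψ i xbar + 2 * μ i * W xbar xkm1 < 0) ∧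
    ∑ i, y i ≤ (ψ0 xbar - ψ0star + μ0 * DX ^ 2) /
      ((Finset.univ.inf' Finset.univ_nonempty μ) * DX ^ 2) :=
  stmt_9_general X W hWpos DX hDX hdiam ψ0 ψ μ0 μ hμ0 hμ xbar hxbar hsf xkm1 xk hxkm1 y hy ψ0star
    hψ0star hsaddle
end

section
/- In the exact proximal point method, suppose the dual multipliers are uniformly bounded: ‖y_k‖₁ ≤ B for all k. Let k̂ = argmin_{1≤k≤K} [ψ₀(x_{k-1}) - ψ₀(x_k)]. Then x_{k̂} is an ε_K-KKT point with ε_K = max{2L_ω, 8L_ω²(μ₀ + ‖μ‖_∞ B)}·[ψ₀(x₀) - ψ₀*]/K; specifically Σᵢ |y_{k̂}⁽ⁱ⁾ψᵢ(x_{k̂})| ≤ 2L_ω[ψ₀(x₀) - ψ₀*]/K and d(∂ψ₀(x_{k̂}) + Σᵢ y_{k̂}⁽ⁱ⁾∂ψᵢ(x_{k̂}) + N_X(x_{k̂}), 0)² ≤ 8L_ω²(μ₀ + ‖μ‖_∞ B)[ψ₀(x₀) - ψ₀*]/K. -/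
/-!
Telescoping the descent inequality shows that the smallest of the first `K` decreases
`ψ₀(x_{k-1}) - ψ₀(x_k)` is at most `(ψ₀(x₀) - ψ₀*)/K`, and descent bounds both
`(μ₀ + μᵀy_k) W(x_{k-1}, x_k)` and `μᵀy_k W(x_{k-1}, x_k)` by that decrease. Complementary
slackness turns the slackness residual into `2 μᵀy_k W(x_k, x_{k-1}) ≤ 2 L_ω μᵀy_k W(x_{k-1}, x_k)`;
the stationarity residual is at most `2 (μ₀ + μᵀy_k) L_ω ‖x_k - x_{k-1}‖` with
`‖x_k - x_{k-1}‖² ≤ 2 W(x_{k-1}, x_k)`. Finally `μᵀy_k ≤ ‖μ‖_∞ ‖y_k‖₁ ≤ ‖μ‖_∞ B`.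
-/

local notation "⟪" x ", " y "⟫" => @inner ℝ _ _ x y

/-- The set ∂ψ₀(x_k) + Σᵢ y_k⁽ⁱ⁾ ∂ψᵢ(x_k) + N_X(x_k) appearing in the
approximate stationarity condition. -/
def statSet {n m : ℕ} (X : Set (EuclideanSpace ℝ (Fin n)))
    (sψ0 : EuclideanSpace ℝ (Fin n) → Set (EuclideanSpace ℝ (Fin n)))
    (sψ : Fin m → EuclideanSpace ℝ (Fin n) → Set (EuclideanSpace ℝ (Fin n)))
    (yk : Fin m → ℝ) (xk : EuclideanSpace ℝ (Fin n)) :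
    Set (EuclideanSpace ℝ (Fin n)) :=
  {v | ∃ g0 ∈ sψ0 xk, ∃ g : Fin m → EuclideanSpace ℝ (Fin n),
    (∀ i, g i ∈ sψ i xk) ∧
    ∃ u : EuclideanSpace ℝ (Fin n), (∀ w ∈ X, ⟪u, w - xk⟫ ≤ 0) ∧
      v = g0 + (∑ i, yk i • g i) + u}

open Finset

theorem min_decrease_le_div {f : ℕ → ℝ} {c : ℝ} {K j : ℕ} (hc : c ≤ f K)
    (hj : j ∈ Icc 1 K) (hmin : ∀ k ∈ Icc 1 K, f (j - 1) - f j ≤ f (k - 1) - f k) :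
    f (j - 1) - f j ≤ (f 0 - c) / K := by
  obtain ⟨hj1, hjK⟩ := mem_Icc.mp hj
  have hK : (0 : ℝ) < K := by exact_mod_cast hj1.trans hjK
  have hsum : (range K).card • (f (j - 1) - f j) ≤ ∑ k ∈ range K, (f k - f (k + 1)) :=
    card_nsmul_le_sum _ _ _ fun k hk => by
      simpa using hmin (k + 1) (mem_Icc.mpr ⟨by omega, by simpa using hk⟩)
  rw [sum_range_sub', card_range, nsmul_eq_mul] at hsum
  rw [le_div_iff₀ hK]
  linarith

theorem sum_abs_eq_of_forall_eq_neg {ι : Type*} [Fintype ι] {a y μ : ι → ℝ} {w : ℝ}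
    (ha : ∀ i, a i = -(2 * y i * μ i * w)) (hy : ∀ i, 0 ≤ y i) (hμ : ∀ i, 0 ≤ μ i)
    (hw : 0 ≤ w) : ∑ i, |a i| = 2 * (∑ i, μ i * y i) * w := by
  rw [mul_sum, sum_mul]
  refine sum_congr rfl fun i _ => ?_
  rw [ha i, abs_neg, abs_of_nonneg (by have := hy i; have := hμ i; positivity)]
  ring

theorem sum_mul_le_sup'_mul_sum_abs {ι : Type*} [Fintype ι] [Nonempty ι] {μ : ι → ℝ}
    (hμ : ∀ i, 0 ≤ μ i) (y : ι → ℝ) :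
    ∑ i, μ i * y i ≤ univ.sup' univ_nonempty μ * ∑ i, |y i| := by
  rw [mul_sum]
  refine sum_le_sum fun i _ => ?_
  calc μ i * y i ≤ μ i * |y i| := mul_le_mul_of_nonneg_left (le_abs_self _) (hμ i)
    _ ≤ univ.sup' univ_nonempty μ * |y i| :=
      mul_le_mul_of_nonneg_right (le_sup' μ (mem_univ i)) (abs_nonneg _)

theorem sq_le_of_le_mul_norm_sub_of_lipschitz {E : Type*} [SeminormedAddCommGroup E]
    {g : E → E} {a b : E} {L c I w D : ℝ} (hg : ‖g a - g b‖ ≤ L * ‖a - b‖)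
    (hI0 : 0 ≤ I) (hI : I ≤ 2 * c * ‖g a - g b‖) (hab : ‖a - b‖ ^ 2 ≤ 2 * w)
    (hc : 0 ≤ c) (hcw : c * w ≤ D) : I ^ 2 ≤ 8 * L ^ 2 * c * D := by
  have hIL : I ≤ 2 * c * (L * ‖a - b‖) := hI.trans (by gcongr)
  calc I ^ 2 ≤ (2 * c * (L * ‖a - b‖)) ^ 2 := pow_le_pow_left₀ hI0 hIL 2
    _ = 4 * L ^ 2 * c * (c * ‖a - b‖ ^ 2) := by ring
    _ ≤ 4 * L ^ 2 * c * (c * (2 * w)) := by gcongr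
    _ = 8 * L ^ 2 * c * (c * w) := by ring
    _ ≤ 8 * L ^ 2 * c * D := by gcongr

theorem stmt_11_general {n m : ℕ} [NeZero m] (X : Set (EuclideanSpace ℝ (Fin n)))
    (W : EuclideanSpace ℝ (Fin n) → EuclideanSpace ℝ (Fin n) → ℝ)
    (hWpos : ∀ x y, 0 ≤ W x y)
    (hWlow : ∀ x y, ‖x - y‖^2 ≤ 2 * W x y)
    (Lω : ℝ) (hLω : 0 ≤ Lω)
    (hWsym : ∀ x y, W x y ≤ Lω * W y x)
    (gradω : EuclideanSpace ℝ (Fin n) → EuclideanSpace ℝ (Fin n))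
    (hgradLip : ∀ x y, ‖gradω x - gradω y‖ ≤ Lω * ‖x - y‖)
    (ψ0 : EuclideanSpace ℝ (Fin n) → ℝ) (ψ : Fin m → EuclideanSpace ℝ (Fin n) → ℝ)
    (sψ0 : EuclideanSpace ℝ (Fin n) → Set (EuclideanSpace ℝ (Fin n)))
    (sψ : Fin m → EuclideanSpace ℝ (Fin n) → Set (EuclideanSpace ℝ (Fin n)))
    (μ0 : ℝ) (μ : Fin m → ℝ) (hμ0 : 0 ≤ μ0) (hμ : ∀ i, 0 ≤ μ i)
    (x : ℕ → EuclideanSpace ℝ (Fin n)) (y : ℕ → Fin m → ℝ)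
    (hy : ∀ k i, 0 ≤ y k i)
    -- uniform dual boundedness: ‖y_k‖₁ ≤ B
    (B : ℝ) (hB : ∀ k, ∑ i, |y k i| ≤ B)
    -- optimal value lower bound: ψ₀* ≤ ψ₀(x_k)
    (ψ0star : ℝ) (hψ0star : ∀ k, ψ0star ≤ ψ0 (x k))
    -- complementary slackness of the subproblem (relation (3.13))
    (hcs : ∀ k, 1 ≤ k → ∀ i,
      y k i * ψ i (x k) = -(2 * y k i * μ i * W (x k) (x (k - 1))))
    -- approximate stationarity bound (relation (3.14))
    (hstat : ∀ k, 1 ≤ k →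
      Metric.infDist 0 (statSet X sψ0 sψ (y k) (x k)) ≤
        2 * (μ0 + ∑ i, μ i * y k i) * ‖gradω (x k) - gradω (x (k - 1))‖)
    -- sufficient descent (relation (3.15))
    (hdesc : ∀ k, 1 ≤ k →
      ψ0 (x (k - 1)) - ψ0 (x k) ≥
        2 * μ0 * W (x k) (x (k - 1)) + (μ0 + ∑ i, μ i * y k i) * W (x (k - 1)) (x k))
    (K : ℕ)
    -- k̂ = argmin_{1 ≤ k ≤ K} [ψ₀(x_{k-1}) - ψ₀(x_k)]
    (khat : ℕ) (hkhatmem : khat ∈ Finset.Icc 1 K)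
    (hkhat : ∀ k ∈ Finset.Icc 1 K,
      ψ0 (x (khat - 1)) - ψ0 (x khat) ≤ ψ0 (x (k - 1)) - ψ0 (x k)) :
    ∑ i, |y khat i * ψ i (x khat)| ≤ 2 * Lω * (ψ0 (x 0) - ψ0star) / K ∧
    Metric.infDist 0 (statSet X sψ0 sψ (y khat) (x khat)) ^ 2 ≤
      8 * Lω ^ 2 * (μ0 + (Finset.univ.sup' Finset.univ_nonempty μ) * B) *
        (ψ0 (x 0) - ψ0star) / K := by
  obtain ⟨hk1, -⟩ := Finset.mem_Icc.mp hkhatmem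
  set S := ∑ i, μ i * y khat i
  set D := ψ0 (x (khat - 1)) - ψ0 (x khat)
  set avg := (ψ0 (x 0) - ψ0star) / K
  have hS : 0 ≤ S := sum_nonneg fun i _ => mul_nonneg (hμ i) (hy khat i)
  have hsup : 0 ≤ univ.sup' univ_nonempty μ := (hμ 0).trans (le_sup' μ (mem_univ 0))
  have hSB : S ≤ univ.sup' univ_nonempty μ * B :=
    (sum_mul_le_sup'_mul_sum_abs hμ _).trans (mul_le_mul_of_nonneg_left (hB khat) hsup)
  have hDavg : D ≤ avg := min_decrease_le_div (f := fun k => ψ0 (x k)) (hψ0star K) hkhatmem hkhat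
  have hW₁ := hWpos (x khat) (x (khat - 1))
  have hW₂ := hWpos (x (khat - 1)) (x khat)
  have hdesc := hdesc khat hk1
  have hSW : S * W (x (khat - 1)) (x khat) ≤ D := by nlinarith
  have hμSW : (μ0 + S) * W (x (khat - 1)) (x khat) ≤ D := by nlinarith
  have hD : 0 ≤ D := (mul_nonneg (add_nonneg hμ0 hS) hW₂).trans hμSW
  constructor
  · rw [sum_abs_eq_of_forall_eq_neg (hcs khat hk1) (hy khat) hμ hW₁]
    calc 2 * S * W (x khat) (x (khat - 1)) ≤ 2 * Lω * (S * W (x (khat - 1)) (x khat)) := by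
          nlinarith [hWsym (x khat) (x (khat - 1))]
      _ ≤ 2 * Lω * avg := by gcongr; exact hSW.trans hDavg
      _ = 2 * Lω * (ψ0 (x 0) - ψ0star) / K := by ring
  · calc Metric.infDist 0 (statSet X sψ0 sψ (y khat) (x khat)) ^ 2
          ≤ 8 * Lω ^ 2 * (μ0 + S) * D :=
        sq_le_of_le_mul_norm_sub_of_lipschitz (hgradLip _ _) Metric.infDist_nonneg
          (hstat khat hk1) (by rw [norm_sub_rev]; exact hWlow _ _) (add_nonneg hμ0 hS) hμSW
      _ ≤ 8 * Lω ^ 2 * (μ0 + univ.sup' univ_nonempty μ * B) * avg := by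
        gcongr
        exact mul_nonneg (by positivity) (by linarith)
      _ = _ := by ring

/-- Theorem 3.13: complexity of the exact proximal point method under the
uniform dual boundedness assumption. -/
theorem stmt_11 {n m : ℕ} [NeZero m] (X : Set (EuclideanSpace ℝ (Fin n)))
    (hXc : Convex ℝ X)
    (W : EuclideanSpace ℝ (Fin n) → EuclideanSpace ℝ (Fin n) → ℝ)
    (hWpos : ∀ x y, 0 ≤ W x y)
    (hWlow : ∀ x y, ‖x - y‖^2 ≤ 2 * W x y)
    (Lω : ℝ) (hLω : 0 ≤ Lω)
    (hWsym : ∀ x y, W x y ≤ Lω * W y x)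
    (ω : EuclideanSpace ℝ (Fin n) → ℝ)
    (gradω : EuclideanSpace ℝ (Fin n) → EuclideanSpace ℝ (Fin n))
    (hgradLip : ∀ x y, ‖gradω x - gradω y‖ ≤ Lω * ‖x - y‖)
    (ψ0 : EuclideanSpace ℝ (Fin n) → ℝ) (ψ : Fin m → EuclideanSpace ℝ (Fin n) → ℝ)
    (sψ0 : EuclideanSpace ℝ (Fin n) → Set (EuclideanSpace ℝ (Fin n)))
    (sψ : Fin m → EuclideanSpace ℝ (Fin n) → Set (EuclideanSpace ℝ (Fin n)))
    (μ0 : ℝ) (μ : Fin m → ℝ) (hμ0 : 0 ≤ μ0) (hμ : ∀ i, 0 ≤ μ i)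
    (x : ℕ → EuclideanSpace ℝ (Fin n)) (y : ℕ → Fin m → ℝ)
    (hy : ∀ k i, 0 ≤ y k i)
    -- uniform dual boundedness: ‖y_k‖₁ ≤ B
    (B : ℝ) (hB : ∀ k, ∑ i, |y k i| ≤ B)
    -- optimal value lower bound: ψ₀* ≤ ψ₀(x_k)
    (ψ0star : ℝ) (hψ0star : ∀ k, ψ0star ≤ ψ0 (x k))
    -- complementary slackness of the subproblem (relation (3.13))
    (hcs : ∀ k, 1 ≤ k → ∀ i,
      y k i * ψ i (x k) = -(2 * y k i * μ i * W (x k) (x (k - 1))))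
    -- approximate stationarity bound (relation (3.14))
    (hstat : ∀ k, 1 ≤ k →
      Metric.infDist 0 (statSet X sψ0 sψ (y k) (x k)) ≤
        2 * (μ0 + ∑ i, μ i * y k i) * ‖gradω (x k) - gradω (x (k - 1))‖)
    -- sufficient descent (relation (3.15))
    (hdesc : ∀ k, 1 ≤ k →
      ψ0 (x (k - 1)) - ψ0 (x k) ≥
        2 * μ0 * W (x k) (x (k - 1)) + (μ0 + ∑ i, μ i * y k i) * W (x (k - 1)) (x k))
    (K : ℕ) (hK : 1 ≤ K)
    -- k̂ = argmin_{1 ≤ k ≤ K} [ψ₀(x_{k-1}) - ψ₀(x_k)]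
    (khat : ℕ) (hkhatmem : khat ∈ Finset.Icc 1 K)
    (hkhat : ∀ k ∈ Finset.Icc 1 K,
      ψ0 (x (khat - 1)) - ψ0 (x khat) ≤ ψ0 (x (k - 1)) - ψ0 (x k)) :
    ∑ i, |y khat i * ψ i (x khat)| ≤ 2 * Lω * (ψ0 (x 0) - ψ0star) / K ∧
    Metric.infDist 0 (statSet X sψ0 sψ (y khat) (x khat)) ^ 2 ≤
      8 * Lω ^ 2 * (μ0 + (Finset.univ.sup' Finset.univ_nonempty μ) * B) *
        (ψ0 (x 0) - ψ0star) / K :=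
  stmt_11_general X W hWpos hWlow Lω hLω hWsym gradω hgradLip ψ0 ψ sψ0 sψ μ0 μ hμ0 hμ x y hy B hB
    ψ0star hψ0star hcs hstat hdesc K khat hkhatmem hkhat
end

section
/- In the exact proximal point method, the KKT condition of the k-th subproblem implies Σ_{i=1}^{m} |y_k⁽ⁱ⁾ ψᵢ(x_k)| = 2(μᵀy_k)·W(x_k, x_{k-1}) ≤ 2L_ω·[ψ₀(x_{k-1}) - ψ₀(x_k)]. -/
/-!
Complementary slackness makes each term `y⁽ⁱ⁾ ψᵢ(x_k)` equal to `-2 μᵢ y⁽ⁱ⁾ W(x_k, x_{k-1}) ≤ 0`,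
so the residual sums to `2 (μᵀy) W(x_k, x_{k-1})`. Swapping the arguments of `W` costs a factor
`L_ω`, and the descent inequality bounds `(μᵀy) W(x_{k-1}, x_k)` by the decrease of `ψ₀`.
-/

section

variable {R : Type*} [CommRing R] [LinearOrder R] [IsStrictOrderedRing R]

theorem abs_mul_eq_of_mul_add_eq_zero {y c μ w : R} (hy : 0 ≤ y) (hμ : 0 ≤ μ) (hw : 0 ≤ w)
    (h : y * (c + 2 * μ * w) = 0) : |y * c| = 2 * (μ * y) * w := by
  have hyc : y * c = -(2 * (μ * y) * w) := by linear_combination h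
  rw [hyc, abs_neg, abs_of_nonneg (by positivity)]

theorem mul_le_mul_of_le_mul_of_add_mul_le {s w w' L μ₀ d : R} (hs : 0 ≤ s) (hL : 0 ≤ L)
    (hμ₀ : 0 ≤ μ₀) (hw' : 0 ≤ w') (hswap : w ≤ L * w') (hdesc : (μ₀ + s) * w' ≤ d) :
    s * w ≤ L * d :=
  calc s * w ≤ s * (L * w') := mul_le_mul_of_nonneg_left hswap hs
    _ = L * (s * w') := by ring
    _ ≤ L * d := mul_le_mul_of_nonneg_left (by nlinarith [mul_nonneg hμ₀ hw']) hL

end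

theorem stmt_12_general {n m : ℕ}
    (W : EuclideanSpace ℝ (Fin n) → EuclideanSpace ℝ (Fin n) → ℝ)
    (hWpos : ∀ x y, 0 ≤ W x y)
    (Lω : ℝ) (hLω : 0 ≤ Lω)
    (hWsym : ∀ x y, W x y ≤ Lω * W y x)
    (ψ0 : EuclideanSpace ℝ (Fin n) → ℝ) (ψ : Fin m → EuclideanSpace ℝ (Fin n) → ℝ)
    (μ0 : ℝ) (μ : Fin m → ℝ) (hμ0 : 0 ≤ μ0) (hμ : ∀ i, 0 ≤ μ i)
    (xkm1 xk : EuclideanSpace ℝ (Fin n))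
    (y : Fin m → ℝ) (hy : ∀ i, 0 ≤ y i)
    -- complementary slackness of the subproblem
    (hcs : ∀ i, y i * (ψ i xk + 2 * μ i * W xk xkm1) = 0)
    -- sufficient descent inequality
    (hdesc : ψ0 xkm1 - ψ0 xk ≥ (μ0 + ∑ i, μ i * y i) * W xkm1 xk) :
    (∑ i, |y i * ψ i xk|) = 2 * (∑ i, μ i * y i) * W xk xkm1 ∧
    2 * (∑ i, μ i * y i) * W xk xkm1 ≤ 2 * Lω * (ψ0 xkm1 - ψ0 xk) := by
  have hμy : 0 ≤ ∑ i, μ i * y i := Finset.sum_nonneg fun i _ => mul_nonneg (hμ i) (hy i)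
  have hbound := mul_le_mul_of_le_mul_of_add_mul_le hμy hLω hμ0 (hWpos xkm1 xk)
    (hWsym xk xkm1) hdesc
  refine ⟨?_, by linarith⟩
  calc ∑ i, |y i * ψ i xk| = ∑ i, 2 * (μ i * y i) * W xk xkm1 :=
        Finset.sum_congr rfl fun i _ =>
          abs_mul_eq_of_mul_add_eq_zero (hy i) (hμ i) (hWpos xk xkm1) (hcs i)
    _ = 2 * (∑ i, μ i * y i) * W xk xkm1 := by rw [← Finset.sum_mul, ← Finset.mul_sum]

/-- Relation (3.16): complementary slackness of the proximal subproblem bounds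
the complementarity residual by the objective decrease. -/
theorem stmt_12 {n m : ℕ} (X : Set (EuclideanSpace ℝ (Fin n)))
    (W : EuclideanSpace ℝ (Fin n) → EuclideanSpace ℝ (Fin n) → ℝ)
    (hWpos : ∀ x y, 0 ≤ W x y)
    (Lω : ℝ) (hLω : 0 ≤ Lω)
    (hWsym : ∀ x y, W x y ≤ Lω * W y x)
    (ψ0 : EuclideanSpace ℝ (Fin n) → ℝ) (ψ : Fin m → EuclideanSpace ℝ (Fin n) → ℝ)
    (μ0 : ℝ) (μ : Fin m → ℝ) (hμ0 : 0 ≤ μ0) (hμ : ∀ i, 0 ≤ μ i)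
    (xkm1 xk : EuclideanSpace ℝ (Fin n))
    (y : Fin m → ℝ) (hy : ∀ i, 0 ≤ y i)
    -- complementary slackness of the subproblem
    (hcs : ∀ i, y i * (ψ i xk + 2 * μ i * W xk xkm1) = 0)
    -- sufficient descent inequality
    (hdesc : ψ0 xkm1 - ψ0 xk ≥ (μ0 + ∑ i, μ i * y i) * W xkm1 xk) :
    (∑ i, |y i * ψ i xk|) = 2 * (∑ i, μ i * y i) * W xk xkm1 ∧
    2 * (∑ i, μ i * y i) * W xk xkm1 ≤ 2 * Lω * (ψ0 xkm1 - ψ0 xk) :=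
  stmt_12_general W hWpos Lω hLω hWsym ψ0 ψ μ0 μ hμ0 hμ xkm1 xk y hy hcs hdesc
end

section
/- Let (x*, y*) be a saddle point of the Lagrangian L(x,y) = ψ₀(x) + ⟨y, ψ(x)⟩ over x ∈ X, y ≥ 0, i.e., L(x*, y) ≤ L(x*, y*) ≤ L(x, y*) for all x ∈ X, y ≥ 0. For any x̄ ∈ X define ŷ := (‖y*‖₂ + 1)·[ψ(x̄)]₊/‖[ψ(x̄)]₊‖₂ (when [ψ(x̄)]₊ ≠ 0). Then the gap Q(z̄, ẑ) := L(x̄, ŷ) - L(x*, ȳ) satisfies Q(z̄, ẑ) ≥ ‖[ψ(x̄)]₊‖₂ for any ȳ ≥ 0, where z̄ = (x̄, ȳ) and ẑ = (x*, ŷ). -/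
/-!
The saddle-point inequalities give L(x*, ȳ) ≤ L(x*, y*) ≤ L(x̄, y*), so the gap is at least
L(x̄, ŷ) - L(x̄, y*) = ⟨ŷ - y*, ψ(x̄)⟩. By the choice of ŷ, ⟨ŷ, ψ(x̄)⟩ = (‖y*‖₂ + 1)‖[ψ(x̄)]₊‖₂,
while y* ≥ 0 and Cauchy–Schwarz give ⟨y*, ψ(x̄)⟩ ≤ ⟨y*, [ψ(x̄)]₊⟩ ≤ ‖y*‖₂‖[ψ(x̄)]₊‖₂.
-/

open Finset

lemma max_zero_mul_self (a : ℝ) : max a 0 * a = max a 0 ^ 2 := by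
  rcases le_total a 0 with ha | ha
  · simp [max_eq_right ha]
  · rw [max_eq_left ha, sq]

section PosPart

variable {ι : Type*} [Fintype ι]

lemma sum_mul_le_sqrt_mul_sqrt_max_zero (y v : ι → ℝ) (hy : ∀ i, 0 ≤ y i) :
    ∑ i, y i * v i ≤ √(∑ i, y i ^ 2) * √(∑ i, max (v i) 0 ^ 2) :=
  calc ∑ i, y i * v i ≤ ∑ i, y i * max (v i) 0 :=
        sum_le_sum fun i _ => mul_le_mul_of_nonneg_left (le_max_left _ _) (hy i)
    _ ≤ √(∑ i, y i ^ 2) * √(∑ i, max (v i) 0 ^ 2) := Real.sum_mul_le_sqrt_mul_sqrt _ _ _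

lemma sum_normalized_max_zero_mul_eq (c : ℝ) (v : ι → ℝ) (hv : √(∑ i, max (v i) 0 ^ 2) ≠ 0) :
    ∑ i, c * max (v i) 0 / √(∑ j, max (v j) 0 ^ 2) * v i = c * √(∑ i, max (v i) 0 ^ 2) := by
  set S := √(∑ i, max (v i) 0 ^ 2) with hS
  have hS2 : S ^ 2 = ∑ i, max (v i) 0 ^ 2 := Real.sq_sqrt (sum_nonneg fun _ _ => sq_nonneg _)
  calc ∑ i, c * max (v i) 0 / S * v i = c / S * ∑ i, max (v i) 0 ^ 2 := by
        rw [mul_sum]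
        refine sum_congr rfl fun i _ => ?_
        rw [← max_zero_mul_self]
        ring
    _ = c * S := by
        rw [← hS2]
        field_simp

end PosPart

theorem stmt_15_general {n m : ℕ} (X : Set (EuclideanSpace ℝ (Fin n)))
    (ψ0 : EuclideanSpace ℝ (Fin n) → ℝ) (ψ : EuclideanSpace ℝ (Fin n) → Fin m → ℝ)
    (L : EuclideanSpace ℝ (Fin n) → (Fin m → ℝ) → ℝ)
    (hL : ∀ x y, L x y = ψ0 x + ∑ i, y i * ψ x i)
    (xstar : EuclideanSpace ℝ (Fin n)) (ystar : Fin m → ℝ)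
    (hystar : ∀ i, 0 ≤ ystar i)
    -- (x*, y*) is a saddle point of L over X × ℝ₊^m
    (hsaddle : ∀ x ∈ X, ∀ y : Fin m → ℝ, (∀ i, 0 ≤ y i) →
      L xstar y ≤ L xstar ystar ∧ L xstar ystar ≤ L x ystar)
    (xbar : EuclideanSpace ℝ (Fin n)) (hxbar : xbar ∈ X)
    (ybar : Fin m → ℝ) (hybar : ∀ i, 0 ≤ ybar i)
    -- [ψ(x̄)]₊ ≠ 0
    (hpos : Real.sqrt (∑ i, max (ψ xbar i) 0 ^ 2) ≠ 0)
    (yhat : Fin m → ℝ)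
    (hyhat : ∀ i, yhat i =
      (Real.sqrt (∑ j, ystar j ^ 2) + 1) * max (ψ xbar i) 0 /
        Real.sqrt (∑ j, max (ψ xbar j) 0 ^ 2)) :
    L xbar yhat - L xstar ybar ≥ Real.sqrt (∑ i, max (ψ xbar i) 0 ^ 2) := by
  obtain ⟨hmax, hmin⟩ := hsaddle xbar hxbar ybar hybar
  have hyhat_inner : ∑ i, yhat i * ψ xbar i =
      (√(∑ j, ystar j ^ 2) + 1) * √(∑ i, max (ψ xbar i) 0 ^ 2) := by
    simp only [hyhat]
    exact sum_normalized_max_zero_mul_eq _ _ hpos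
  have hystar_inner := sum_mul_le_sqrt_mul_sqrt_max_zero ystar (ψ xbar) hystar
  have hgap := hmax.trans hmin
  rw [hL, hL] at hgap
  rw [hL, hL, hyhat_inner]
  linarith

/-- The gap function Q(z̄, ẑ) with ŷ = (‖y*‖₂+1)[ψ(x̄)]₊/‖[ψ(x̄)]₊‖₂ upper bounds
the constraint violation ‖[ψ(x̄)]₊‖₂. -/
theorem stmt_15 {n m : ℕ} (X : Set (EuclideanSpace ℝ (Fin n))) (hXc : Convex ℝ X)
    (ψ0 : EuclideanSpace ℝ (Fin n) → ℝ) (ψ : EuclideanSpace ℝ (Fin n) → Fin m → ℝ)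
    (hψ0 : ConvexOn ℝ X ψ0) (hψ : ∀ i, ConvexOn ℝ X fun x => ψ x i)
    (L : EuclideanSpace ℝ (Fin n) → (Fin m → ℝ) → ℝ)
    (hL : ∀ x y, L x y = ψ0 x + ∑ i, y i * ψ x i)
    (xstar : EuclideanSpace ℝ (Fin n)) (ystar : Fin m → ℝ)
    (hxstar : xstar ∈ X) (hystar : ∀ i, 0 ≤ ystar i)
    -- (x*, y*) is a saddle point of L over X × ℝ₊^m
    (hsaddle : ∀ x ∈ X, ∀ y : Fin m → ℝ, (∀ i, 0 ≤ y i) →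
      L xstar y ≤ L xstar ystar ∧ L xstar ystar ≤ L x ystar)
    (xbar : EuclideanSpace ℝ (Fin n)) (hxbar : xbar ∈ X)
    (ybar : Fin m → ℝ) (hybar : ∀ i, 0 ≤ ybar i)
    -- [ψ(x̄)]₊ ≠ 0
    (hpos : Real.sqrt (∑ i, max (ψ xbar i) 0 ^ 2) ≠ 0)
    (yhat : Fin m → ℝ)
    (hyhat : ∀ i, yhat i =
      (Real.sqrt (∑ j, ystar j ^ 2) + 1) * max (ψ xbar i) 0 /
        Real.sqrt (∑ j, max (ψ xbar j) 0 ^ 2)) :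
    L xbar yhat - L xstar ybar ≥ Real.sqrt (∑ i, max (ψ xbar i) 0 ^ 2) :=
  stmt_15_general X ψ0 ψ L hL xstar ystar hystar hsaddle xbar hxbar ybar hybar hpos yhat hyhat
end
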